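/- arXiv:math/0501283 — 2 statements merged into one kernel-verified Lean document; each statement's English description precedes it below -/
import Mathlib

section
/- For a partition λ of N with largest part λ₁ > N/2, the number of standard Young tableaux of shape λ satisfies f^λ ≥ binomial(λ₁, N − λ₁). -/
/-- The hook length of the cell `(i,j)` of a Young diagram:
`h(i,j) = (λᵢ - j) + (λ'ⱼ - i) - 1`. -/
def YoungDiagram.hookLength (μ : YoungDiagram) (i j : ℕ) : ℕ :=
  (μ.rowLen i - j) + (μ.colLen j - i) - 1

/-- Standard Young tableaux of shape `μ`: bijective fillings of the cells of `μ`
with `0, …, |μ| - 1` which are strictly increasing along rows and columns. -/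
def SYT (μ : YoungDiagram) : Type :=
  {T : {c // c ∈ μ.cells} ≃ Fin μ.card //
    ∀ c d : {c // c ∈ μ.cells}, c.1.1 ≤ d.1.1 → c.1.2 ≤ d.1.2 → c ≠ d → T c < T d}

/-- `fSYT μ` is the number of standard Young tableaux of shape `μ`. -/
noncomputable def fSYT (μ : YoungDiagram) : ℕ := Nat.card (SYT μ)

/-!
Let `L = λ₁` and `m = N - L`. An `m`-subset `s₀ < ⋯ < s_{m-1}` of `{0, …, L - 1}` yields a
standard tableau: list the cells below the first row in reading order and give the `k`-th of
them the entry `s_k + k + 1`; the first row takes the remaining entries in increasing order.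
The first-row cell above the `k`-th lower cell precedes it, because its column is at most
`k ≤ s_k`. The first row determines the subset, so `f^λ ≥ C(L, m)`.
-/

open Finset

section Interleave

variable {m n : ℕ}

theorem Fin.val_le_orderEmbedding_apply (s : Fin m ↪o Fin n) (k : Fin m) :
    (k : ℕ) ≤ s k :=
  calc (k : ℕ) = #(Iio k) := (Fin.card_Iio k).symm
    _ ≤ #(Iio (s k)) := card_le_card_of_injOn s
        (fun _ hx => mem_Iio.mpr (s.lt_iff_lt.mpr (mem_Iio.mp hx))) s.injective.injOn
    _ = s k := Fin.card_Iio _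

def interleaveCount (s : Fin m ↪o Fin n) (j : Fin n) : ℕ := #{k | s k < j}

theorem interleaveCount_le_iff (s : Fin m ↪o Fin n) {j : Fin n} {k : Fin m} :
    interleaveCount s j ≤ k ↔ j ≤ s k := by
  constructor
  · intro h
    by_contra! hk
    have : #(Iic k) ≤ interleaveCount s j := card_le_card fun k' hk' => by
      simp only [mem_filter, mem_univ, true_and]
      exact (s.monotone (mem_Iic.mp hk')).trans_lt hk
    rw [Fin.card_Iic] at this
    omega
  · intro h
    calc interleaveCount s j ≤ #(Iio k) := card_le_card fun k' hk' => by
          simp only [mem_filter, mem_univ, true_and] at hk'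
          exact mem_Iio.mpr (s.lt_iff_lt.mp (hk'.trans_le h))
      _ = k := Fin.card_Iio k

theorem interleaveCount_mono (s : Fin m ↪o Fin n) : Monotone (interleaveCount s) :=
  fun _ _ hj => card_le_card (monotone_filter_right _ fun _ _ hk => hk.trans_le hj)

theorem interleaveCount_injective : Function.Injective (interleaveCount (m := m) (n := n)) := by
  intro s t h
  ext k
  refine congrArg Fin.val (le_antisymm ?_ ?_)
  · exact (interleaveCount_le_iff t).mp (h ▸ (interleaveCount_le_iff s).mpr le_rfl)
  · exact (interleaveCount_le_iff s).mp (h ▸ (interleaveCount_le_iff t).mpr le_rfl)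

/-- Merges a chain of `n` elements with a chain of `m` elements so that the `k`-th element of
the second chain comes right after the first `s k + 1` elements of the first one. -/
def interleave (s : Fin m ↪o Fin n) : Fin n ⊕ Fin m → ℕ
  | .inl j => j + interleaveCount s j
  | .inr k => s k + k + 1

theorem interleave_inl_strictMono (s : Fin m ↪o Fin n) :
    StrictMono fun j => interleave s (.inl j) := fun j j' h => by
  have := interleaveCount_mono s h.le
  simp only [interleave, Fin.lt_def] at h ⊢
  omega

theorem interleave_inr_strictMono (s : Fin m ↪o Fin n) :
    StrictMono fun k => interleave s (.inr k) := fun k k' h => by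
  have := s.lt_iff_lt.mpr h
  simp only [interleave, Fin.lt_def] at h this ⊢
  omega

theorem interleave_inl_lt_inr (s : Fin m ↪o Fin n) {j : Fin n} {k : Fin m} (h : j ≤ s k) :
    interleave s (.inl j) < interleave s (.inr k) := by
  have := (interleaveCount_le_iff s).mpr h
  simp only [interleave, Fin.le_def] at h this ⊢
  omega

theorem interleave_inr_lt_inl (s : Fin m ↪o Fin n) {j : Fin n} {k : Fin m} (h : s k < j) :
    interleave s (.inr k) < interleave s (.inl j) := by
  have := (interleaveCount_le_iff s).not.mpr (not_le.mpr h)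
  simp only [interleave, Fin.lt_def] at h this ⊢
  omega

theorem interleave_injective (s : Fin m ↪o Fin n) : Function.Injective (interleave s) := by
  rintro (j | k) (j' | k') h
  · exact congrArg _ ((interleave_inl_strictMono s).injective h)
  · rcases le_or_gt j (s k') with h' | h'
    · exact absurd h (interleave_inl_lt_inr s h').ne
    · exact absurd h (interleave_inr_lt_inl s h').ne'
  · rcases le_or_gt j' (s k) with h' | h'
    · exact absurd h (interleave_inl_lt_inr s h').ne'
    · exact absurd h (interleave_inr_lt_inl s h').ne
  · exact congrArg _ ((interleave_inr_strictMono s).injective h)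

theorem interleave_lt (s : Fin m ↪o Fin n) (x : Fin n ⊕ Fin m) : interleave s x < n + m := by
  rcases x with j | k
  · have : interleaveCount s j ≤ m := (card_le_univ _).trans_eq (Fintype.card_fin m)
    have := j.isLt
    simp only [interleave]
    omega
  · have := (s k).isLt
    have := k.isLt
    simp only [interleave]
    omega

end Interleave

noncomputable def SYT.ofInjective {μ : YoungDiagram} (f : {c // c ∈ μ.cells} → Fin μ.card)
    (hf : Function.Injective f)
    (hmono : ∀ c d : {c // c ∈ μ.cells}, c.1.1 ≤ d.1.1 → c.1.2 ≤ d.1.2 → c ≠ d → f c < f d) :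
    SYT μ :=
  ⟨Equiv.ofBijective f ((Fintype.bijective_iff_injective_and_card f).mpr ⟨hf, by simp⟩), hmono⟩

instance SYT.finite (μ : YoungDiagram) : Finite (SYT μ) := Subtype.finite

namespace YoungDiagram

variable (μ : YoungDiagram)

def lowerCells : Finset (ℕ × ℕ) := {c ∈ μ.cells | c.1 ≠ 0}

theorem card_lowerCells_add_rowLen_zero : #μ.lowerCells + μ.rowLen 0 = μ.card := by
  rw [rowLen_eq_card, add_comm]
  exact card_filter_add_card_filter_not (fun c : ℕ × ℕ => c.1 = 0)

def readingRank (c : ℕ × ℕ) : ℕ := #{d ∈ μ.lowerCells | toLex d < toLex c}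

variable {μ}

theorem readingRank_lt_card {c : ℕ × ℕ} (hc : c ∈ μ.lowerCells) :
    μ.readingRank c < #μ.lowerCells :=
  card_lt_card (filter_ssubset.mpr ⟨c, hc, lt_irrefl _⟩)

theorem readingRank_lt_readingRank {c d : ℕ × ℕ} (hc : c ∈ μ.lowerCells)
    (h : toLex c < toLex d) : μ.readingRank c < μ.readingRank d := by
  refine card_lt_card ⟨monotone_filter_right _ fun _ _ he => he.trans h, fun hsub => ?_⟩
  exact lt_irrefl _ (mem_filter.mp (hsub (mem_filter.mpr ⟨hc, h⟩))).2

theorem snd_le_readingRank {c : ℕ × ℕ} (hc : c ∈ μ.lowerCells) : c.2 ≤ μ.readingRank c := by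
  obtain ⟨hcμ, hc0⟩ := mem_filter.mp hc
  calc c.2 = #((range c.2).map ⟨fun t => (c.1, t), fun _ _ h => (Prod.ext_iff.mp h).2⟩) := by simp
    _ ≤ μ.readingRank c := card_le_card fun d hd => by
      obtain ⟨t, ht, rfl⟩ := mem_map.mp hd
      have ht := mem_range.mp ht
      refine mem_filter.mpr ⟨mem_filter.mpr ⟨?_, hc0⟩, Prod.Lex.toLex_lt_toLex.mpr (.inr ⟨rfl, ht⟩)⟩
      exact (mem_cells _).mpr (μ.up_left_mem le_rfl ht.le ((mem_cells _).mp hcμ))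

def cellIndex (c : {c // c ∈ μ.cells}) : Fin (μ.rowLen 0) ⊕ Fin (μ.card - μ.rowLen 0) :=
  if h : c.1.1 = 0 then
    .inl ⟨c.1.2, mem_iff_lt_rowLen.mp (h ▸ (mem_cells _).mp c.2)⟩
  else
    .inr ⟨μ.readingRank c.1, by
      have := readingRank_lt_card (mem_filter.mpr ⟨c.2, h⟩)
      have := μ.card_lowerCells_add_rowLen_zero
      omega⟩

theorem cellIndex_injective : Function.Injective (cellIndex (μ := μ)) := by
  intro c d h
  unfold cellIndex at h
  split_ifs at h with hc hd hd
  · exact Subtype.ext (Prod.ext (hc.trans hd.symm) (Fin.mk.inj_iff.mp (Sum.inl_injective h)))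
  · have hrank := Fin.mk.inj_iff.mp (Sum.inr_injective h)
    rcases lt_trichotomy (toLex c.1) (toLex d.1) with hlt | heq | hgt
    · exact absurd hrank (readingRank_lt_readingRank (mem_filter.mpr ⟨c.2, hc⟩) hlt).ne
    · exact Subtype.ext heq
    · exact absurd hrank (readingRank_lt_readingRank (mem_filter.mpr ⟨d.2, hd⟩) hgt).ne'

theorem interleave_cellIndex_lt (s : Fin (μ.card - μ.rowLen 0) ↪o Fin (μ.rowLen 0))
    {c d : {c // c ∈ μ.cells}} (h₁ : c.1.1 ≤ d.1.1) (h₂ : c.1.2 ≤ d.1.2) (hne : c ≠ d) :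
    interleave s (cellIndex c) < interleave s (cellIndex d) := by
  have hlt : c.1 < d.1 := lt_of_le_of_ne ⟨h₁, h₂⟩ (Subtype.coe_ne_coe.mpr hne)
  unfold cellIndex
  split_ifs with hc hd hd
  · refine interleave_inl_strictMono s (Fin.mk_lt_mk.mpr (lt_of_le_of_ne h₂ fun h => hne ?_))
    exact Subtype.ext (Prod.ext (hc.trans hd.symm) h)
  · refine interleave_inl_lt_inr s (h₂.trans ?_)
    exact (snd_le_readingRank (mem_filter.mpr ⟨d.2, hd⟩)).trans
      (Fin.val_le_orderEmbedding_apply s ⟨_, _⟩)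
  · omega
  · exact interleave_inr_strictMono s (Fin.mk_lt_mk.mpr
      (readingRank_lt_readingRank (mem_filter.mpr ⟨c.2, hc⟩) (Prod.Lex.toLex_strictMono hlt)))

variable (μ)

noncomputable def interleaveSYT (s : Fin (μ.card - μ.rowLen 0) ↪o Fin (μ.rowLen 0)) : SYT μ :=
  SYT.ofInjective
    (fun c => ⟨interleave s (cellIndex c), by
      have := interleave_lt s (cellIndex c)
      have := μ.card_lowerCells_add_rowLen_zero
      omega⟩)
    (fun _ _ h => cellIndex_injective (interleave_injective s (Fin.mk.inj_iff.mp h)))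
    (fun _ _ => interleave_cellIndex_lt s)

theorem interleaveSYT_injective : Function.Injective μ.interleaveSYT := by
  intro s t h
  refine interleaveCount_injective (funext fun j => ?_)
  have hj : ((0, j.1) : ℕ × ℕ) ∈ μ.cells := (mem_cells _).mpr (mem_iff_lt_rowLen.mpr j.2)
  have hidx : cellIndex ⟨(0, j.1), hj⟩ = .inl j := dif_pos rfl
  have := congrArg (fun T : SYT μ => (T.1 ⟨(0, j), hj⟩ : ℕ)) h
  simp only [interleaveSYT, SYT.ofInjective, Equiv.ofBijective_apply, hidx, interleave] at this
  omega

end YoungDiagram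

theorem stmt0_general (N : ℕ) (μ : YoungDiagram) (hμ : μ.card = N) :
    Nat.choose (μ.rowLen 0) (N - μ.rowLen 0) ≤ fSYT μ := by
  subst hμ
  calc (μ.rowLen 0).choose (μ.card - μ.rowLen 0)
      = Nat.card (Fin (μ.card - μ.rowLen 0) ↪o Fin (μ.rowLen 0)) := by
        rw [Nat.card_congr Set.powersetCard.ofFinEmbEquiv, Set.powersetCard.card, Nat.card_fin]
    _ ≤ fSYT μ := Nat.card_le_card_of_injective _ μ.interleaveSYT_injective

theorem stmt0 (N : ℕ) (μ : YoungDiagram) (hμ : μ.card = N)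
    (h : N < 2 * μ.rowLen 0) :
    Nat.choose (μ.rowLen 0) (N - μ.rowLen 0) ≤ fSYT μ :=
  stmt0_general N μ hμ
end

section
/- The number of partitions p(r) of a positive integer r satisfies p(r) ≤ exp(π √(2r/3)) for all r ≥ 1. -/
/-!
Comparing with Euler's product, `p(n) xⁿ ≤ ∏_{k ≤ n} (1 - xᵏ)⁻¹` for `0 ≤ x < 1`.
Expanding `-log (1 - xᵏ)` in powers of `x` and summing over `k` first bounds the logarithm
of the product by `ζ(2) x / (1 - x)`. With `x = (1 + t)⁻¹` this gives
`p(n) ≤ exp (π² / (6t) + n t)`, and `t = π / √(6n)` balances the two terms.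
-/

open Finset Real

lemma hasSum_one_div_nat_add_one_sq :
    HasSum (fun j : ℕ => 1 / ((j : ℝ) + 1) ^ 2) (π ^ 2 / 6) := by
  have h := (hasSum_nat_add_iff (f := fun j : ℕ => 1 / (j : ℝ) ^ 2) (g := π ^ 2 / 6) 1).2
    (by simpa using hasSum_zeta_two)
  exact_mod_cast h

lemma succ_mul_pow_mul_one_sub_le {x : ℝ} (hx0 : 0 ≤ x) (hx1 : x ≤ 1) (j : ℕ) :
    (j + 1) * x ^ j * (1 - x) ≤ 1 - x ^ (j + 1) := by
  rw [← geom_sum_mul_neg]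
  refine mul_le_mul_of_nonneg_right ?_ (sub_nonneg.2 hx1)
  calc (j + 1) * x ^ j = ∑ _i ∈ range (j + 1), x ^ j := by simp
    _ ≤ ∑ i ∈ range (j + 1), x ^ i :=
        sum_le_sum fun i hi => pow_le_pow_of_le_one hx0 hx1 (mem_range_succ_iff.1 hi)

lemma pow_succ_div_one_sub_pow_succ_le {x : ℝ} (hx0 : 0 ≤ x) (hx1 : x < 1) (j : ℕ) :
    x ^ (j + 1) / (1 - x ^ (j + 1)) ≤ x / (1 - x) / (j + 1) := by
  have hxj : x ^ (j + 1) < 1 := pow_lt_one₀ hx0 hx1 j.succ_ne_zero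
  rw [div_div, div_le_div_iff₀ (sub_pos.2 hxj) (mul_pos (sub_pos.2 hx1) j.cast_add_one_pos)]
  calc x ^ (j + 1) * ((1 - x) * (j + 1)) = x * ((j + 1) * x ^ j * (1 - x)) := by ring
    _ ≤ x * (1 - x ^ (j + 1)) :=
        mul_le_mul_of_nonneg_left (succ_mul_pow_mul_one_sub_le hx0 hx1.le j) hx0

/-- After expanding the logarithms, the `j`-th coefficient summed over `k` is a geometric sum,
at most `x / (1 - x) / (j + 1) ^ 2`. -/
lemma sum_neg_log_one_sub_pow_le (n : ℕ) {x : ℝ} (hx0 : 0 ≤ x) (hx1 : x < 1) :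
    ∑ k ∈ Icc 1 n, -log (1 - x ^ k) ≤ π ^ 2 / 6 * (x / (1 - x)) := by
  have hlog : ∀ k ∈ Icc 1 n,
      HasSum (fun j : ℕ => (x ^ k) ^ (j + 1) / (j + 1)) (-log (1 - x ^ k)) := fun k hk =>
    hasSum_pow_div_log_of_abs_lt_one <| by
      rw [abs_of_nonneg (by positivity)]
      exact pow_lt_one₀ hx0 hx1 (Nat.one_le_iff_ne_zero.1 (mem_Icc.1 hk).1)
  refine hasSum_le (fun j => ?_) (hasSum_sum hlog)
    (hasSum_one_div_nat_add_one_sq.mul_right (x / (1 - x)))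
  have hxj : x ^ (j + 1) < 1 := pow_lt_one₀ hx0 hx1 j.succ_ne_zero
  calc ∑ k ∈ Icc 1 n, (x ^ k) ^ (j + 1) / ((j : ℝ) + 1)
      = (∑ k ∈ Ico 1 (n + 1), (x ^ (j + 1)) ^ k) / (j + 1) := by
        rw [← sum_div, Ico_add_one_right_eq_Icc]
        simp_rw [← pow_mul, mul_comm]
    _ ≤ x ^ (j + 1) / (1 - x ^ (j + 1)) / (j + 1) := by
        gcongr
        simpa using geom_sum_Ico_le_of_lt_one (m := 1) (n := n + 1) (by positivity) hxj
    _ ≤ x / (1 - x) / (j + 1) / (j + 1) := by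
        gcongr ?_ / _
        exact pow_succ_div_one_sub_pow_succ_le hx0 hx1 j
    _ = 1 / ((j : ℝ) + 1) ^ 2 * (x / (1 - x)) := by
        field_simp

namespace Nat.Partition

variable {n : ℕ}

lemma sum_mul_count_eq (p : n.Partition) : ∑ k ∈ Icc 1 n, k * p.parts.count k = n := by
  simpa [toFinsuppAntidiag, mul_comm] using
    (mem_finsuppAntidiag.1 p.toFinsuppAntidiag_mem_finsuppAntidiag).1

lemma count_le (p : n.Partition) {k : ℕ} (hk : k ∈ Icc 1 n) : p.parts.count k ≤ n :=
  calc p.parts.count k ≤ k * p.parts.count k := Nat.le_mul_of_pos_left _ (mem_Icc.1 hk).1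
    _ ≤ ∑ i ∈ Icc 1 n, i * p.parts.count i :=
        single_le_sum (f := fun i => i * p.parts.count i) (fun _ _ => Nat.zero_le _) hk
    _ = n := p.sum_mul_count_eq

lemma count_eq_zero_of_notMem_Icc (p : n.Partition) {k : ℕ} (hk : k ∉ Icc 1 n) :
    p.parts.count k = 0 :=
  Multiset.count_eq_zero.2 fun h => hk (mem_Icc.2 ⟨p.parts_pos h, le_of_mem_parts h⟩)

def multiplicities (p : n.Partition) (k : Icc 1 n) : ℕ := p.parts.count (k : ℕ)

lemma multiplicities_injective : Function.Injective (multiplicities (n := n)) := by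
  intro p q h
  ext k
  by_cases hk : k ∈ Icc 1 n
  · exact congrFun h (⟨k, hk⟩ : Icc 1 n)
  · rw [count_eq_zero_of_notMem_Icc p hk, count_eq_zero_of_notMem_Icc q hk]

theorem card_mul_pow_le_prod {x : ℝ} (hx0 : 0 ≤ x) (hx1 : x < 1) :
    (Fintype.card n.Partition : ℝ) * x ^ n ≤ ∏ k ∈ Icc 1 n, (1 - x ^ k)⁻¹ := by
  set w : (Icc 1 n → ℕ) → ℝ := fun c => ∏ k : Icc 1 n, x ^ ((k : ℕ) * c k)
  have hw : ∀ p : n.Partition, w p.multiplicities = x ^ n := fun p => by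
    simp only [w, multiplicities, prod_pow_eq_pow_sum]
    rw [sum_coe_sort (Icc 1 n) (fun k => k * p.parts.count k), p.sum_mul_count_eq]
  let e : n.Partition ↪ (Icc 1 n → ℕ) := ⟨multiplicities, multiplicities_injective⟩
  have he : univ.map e ⊆ Fintype.piFinset fun _ => range (n + 1) := by
    intro c hc
    obtain ⟨p, -, rfl⟩ := mem_map.1 hc
    exact Fintype.mem_piFinset.2 fun k => mem_range.2 (Nat.lt_succ_of_le (p.count_le k.2))
  calc (Fintype.card n.Partition : ℝ) * x ^ n = ∑ p : n.Partition, w (e p) := by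
        simp [e, hw]
    _ = ∑ c ∈ univ.map e, w c := (sum_map _ _ _).symm
    _ ≤ ∑ c ∈ Fintype.piFinset fun _ => range (n + 1), w c :=
        sum_le_sum_of_subset_of_nonneg he fun _ _ _ => by positivity
    _ = ∏ k : Icc 1 n, ∑ j ∈ range (n + 1), (x ^ (k : ℕ)) ^ j := by
        simp only [w, prod_univ_sum, pow_mul]
    _ ≤ ∏ k : Icc 1 n, (1 - x ^ (k : ℕ))⁻¹ := by
        refine prod_le_prod (fun _ _ => by positivity) fun k _ => ?_
        have hk1 : x ^ (k : ℕ) < 1 :=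
          pow_lt_one₀ hx0 hx1 (Nat.one_le_iff_ne_zero.1 (mem_Icc.1 k.2).1)
        exact sum_le_hasSum _ (fun _ _ => by positivity)
          (hasSum_geometric_of_lt_one (by positivity) hk1)
    _ = ∏ k ∈ Icc 1 n, (1 - x ^ k)⁻¹ := prod_coe_sort (Icc 1 n) fun k => (1 - x ^ k)⁻¹

theorem card_le_exp (n : ℕ) {t : ℝ} (ht : 0 < t) :
    (Fintype.card n.Partition : ℝ) ≤ exp (π ^ 2 / (6 * t) + n * t) := by
  set x : ℝ := (1 + t)⁻¹
  have hx0 : 0 ≤ x := by positivity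
  have hx1 : x < 1 := inv_lt_one_of_one_lt₀ (by linarith)
  have hfrac : x / (1 - x) = t⁻¹ := by
    have h1x : 1 - x = t * x := by
      simp only [x]
      field_simp
      ring
    rw [h1x, div_mul_cancel_right₀ (by positivity)]
  have hprod :
      ∏ k ∈ Icc 1 n, (1 - x ^ k)⁻¹ = exp (∑ k ∈ Icc 1 n, -Real.log (1 - x ^ k)) := by
    rw [exp_sum]
    refine prod_congr rfl fun k hk => ?_
    have hxk : x ^ k < 1 := pow_lt_one₀ hx0 hx1 (Nat.one_le_iff_ne_zero.1 (mem_Icc.1 hk).1)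
    rw [exp_neg, exp_log (sub_pos.2 hxk)]
  have hgen : (Fintype.card n.Partition : ℝ) * x ^ n ≤ exp (π ^ 2 / 6 * t⁻¹) := by
    rw [← hfrac]
    exact (card_mul_pow_le_prod hx0 hx1).trans
      (hprod ▸ exp_le_exp.2 (sum_neg_log_one_sub_pow_le n hx0 hx1))
  calc (Fintype.card n.Partition : ℝ) = Fintype.card n.Partition * x ^ n * (1 + t) ^ n := by
        rw [mul_assoc, ← mul_pow, inv_mul_cancel₀ (by positivity), one_pow, mul_one]
    _ ≤ exp (π ^ 2 / 6 * t⁻¹) * exp t ^ n := by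
        gcongr
        linarith [add_one_le_exp t]
    _ = exp (π ^ 2 / (6 * t) + n * t) := by
        rw [← exp_nat_mul, ← exp_add]
        ring_nf

end Nat.Partition

theorem stmt14 (r : ℕ) (hr : 1 ≤ r) :
    (Fintype.card (Nat.Partition r) : ℝ) ≤
      Real.exp (Real.pi * Real.sqrt (2 * r / 3)) := by
  set u := √(2 * r / 3)
  have hr0 : (0 : ℝ) < r := Nat.cast_pos.2 hr
  have hu : 0 < u := sqrt_pos.2 (by positivity)
  have hu2 : u ^ 2 = 2 * r / 3 := sq_sqrt (by positivity)
  calc (Fintype.card r.Partition : ℝ)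
      ≤ exp (π ^ 2 / (6 * (π / (3 * u))) + r * (π / (3 * u))) :=
        Nat.Partition.card_le_exp r (by positivity)
    _ = exp (π * u) := by
        rw [show (r : ℝ) = 3 * u ^ 2 / 2 by linarith]
        congr 1
        field_simp
        ring
end
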